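/- Let g, h : 2^E → ℝ≥0 be monotone and submodular with g(∅) = h(∅) = 0, and consider any double-greedy run for g and h. Then g(E) = f(H_0) ≤ f(H_1) ≤ … ≤ f(H_n), h(E) = f(E \ G_0) ≤ f(E \ G_1) ≤ … ≤ f(E \ G_n), and f(H_n) = f(E \ G_n). -/

import Mathlib

namespace IncDec

open Finset

variable {α : Type*} [Fintype α] [DecidableEq α]

/-- Marginal gain `F(x | S) = F(S ∪ {x}) - F(S)`. -/
def marg (F : Finset α → ℝ) (x : α) (S : Finset α) : ℝ := F (insert x S) - F S

/-- Marginal gain of a set: `F(T | S) = F(T ∪ S) - F(S)`. -/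
def margSet (F : Finset α → ℝ) (T S : Finset α) : ℝ := F (T ∪ S) - F S

/-- Monotone set function. -/
def Mono (F : Finset α → ℝ) : Prop := ∀ ⦃S T : Finset α⦄, S ⊆ T → F S ≤ F T

/-- Nonnegative set function. -/
def Nonneg (F : Finset α → ℝ) : Prop := ∀ S : Finset α, 0 ≤ F S

/-- The combined objective `f(S) = h(S) + g(E \ S)`. -/
def fObj (g h : Finset α → ℝ) (S : Finset α) : ℝ := h S + g Sᶜ

/-- `F` has generic submodularity ratio at least `γ`. -/
def GenSubRatioGE (F : Finset α → ℝ) (γ : ℝ) : Prop :=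
  ∀ A B : Finset α, ∀ e : α, marg F e A ≥ γ * marg F e (A ∪ B)

/-- `F` has curvature at most `c`. -/
def CurvatureLE (F : Finset α → ℝ) (c : ℝ) : Prop :=
  ∀ A B : Finset α, ∀ e : α, e ∉ B → marg F e (A ∪ B) ≥ (1 - c) * marg F e A

/-- Submodular set function. -/
def Submodular (F : Finset α → ℝ) : Prop :=
  ∀ ⦃S T : Finset α⦄, S ⊆ T → ∀ e : α, e ∉ T → marg F e T ≤ marg F e S

/-- Modular set function. -/
def Modular (F : Finset α → ℝ) : Prop := ∀ S : Finset α, F S = ∑ e ∈ S, F {e}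

/-- Gross substitute set function. -/
def GrossSubstitute (F : Finset α → ℝ) : Prop :=
  Submodular F ∧
    ∀ A B : Finset α, Disjoint A B → 2 ≤ B.card → ∀ b ∈ B,
      ∃ b' ∈ B.erase b,
        marg F b A + margSet F (B.erase b) A ≤ marg F b' A + margSet F (B.erase b') A

/-- The set of ratios appearing in the definition of the curvature. -/
def curvRatioSet (F : Finset α → ℝ) : Set ℝ :=
  {r | ∃ A B : Finset α, ∃ e : α, e ∉ B ∧ 0 < marg F e A ∧ r = marg F e (A ∪ B) / marg F e A}

/-- `F` has curvature exactly `c` (with `min ∅ := 1`, i.e. `c = 0` if the ratio set is empty). -/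
def CurvatureEq (F : Finset α → ℝ) (c : ℝ) : Prop :=
  (¬ (curvRatioSet F).Nonempty ∧ c = 0) ∨ IsLeast (curvRatioSet F) (1 - c)

/-- The set of ratios appearing in the definition of the generic submodularity ratio. -/
def gsRatioSet (F : Finset α → ℝ) : Set ℝ :=
  {r | ∃ A B : Finset α, ∃ e : α, 0 < marg F e (A ∪ B) ∧ r = marg F e A / marg F e (A ∪ B)}

/-- `F` has generic submodularity ratio exactly `γ` (with `min ∅ := 1`). -/
def GenSubRatioEq (F : Finset α → ℝ) (γ : ℝ) : Prop :=
  (¬ (gsRatioSet F).Nonempty ∧ γ = 1) ∨ IsLeast (gsRatioSet F) γ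

/-- The singleton-based ratio set `{F(e | E \ {e}) / F({e}) : e ∈ E, F({e}) > 0}`. -/
def curvSingletonSet (F : Finset α → ℝ) : Set ℝ :=
  {r | ∃ e : α, 0 < F {e} ∧ r = marg F e ({e}ᶜ) / F {e}}

/-- A run of the double-greedy algorithm for `g` and `h`: distinct elements `elt 0, …,
`elt (n-1)` enumerating `E` (`elt i` is the element `e*_{i+1}` of the paper), together with the
sets `H i`, `G i` (for `0 ≤ i ≤ n`), each new element maximizing the larger marginal gain and
being added to the side realizing it. -/
structure DGRun (α : Type*) [Fintype α] [DecidableEq α] (g h : Finset α → ℝ) where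
  elt : ℕ → α
  H : ℕ → Finset α
  G : ℕ → Finset α
  H0 : H 0 = ∅
  G0 : G 0 = ∅
  mem : ∀ i < Fintype.card α, elt i ∉ H i ∪ G i
  distinct : ∀ i < Fintype.card α, ∀ j < Fintype.card α, elt i = elt j → i = j
  enum : ∀ x : α, ∃ i < Fintype.card α, elt i = x
  greedy : ∀ i < Fintype.card α, ∀ x : α, x ∉ H i ∪ G i →
      max (marg g x (G i)) (marg h x (H i)) ≤ max (marg g (elt i) (G i)) (marg h (elt i) (H i))
  step : ∀ i < Fintype.card α,
      (H (i + 1) = insert (elt i) (H i) ∧ G (i + 1) = G i ∧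
        marg g (elt i) (G i) ≤ marg h (elt i) (H i)) ∨
      (G (i + 1) = insert (elt i) (G i) ∧ H (i + 1) = H i ∧
        marg h (elt i) (H i) ≤ marg g (elt i) (G i))

/-- `phi R i` is the increment `φ_{i+1}` of the double-greedy run `R`. -/
def phi {g h : Finset α → ℝ} (R : DGRun α g h) (i : ℕ) : ℝ :=
  max (marg g (R.elt i) (R.G i)) (marg h (R.elt i) (R.H i))

/-!
Adding `e` to `H` changes `f(H)` by `h(e | H) - g(e | E \ (H ∪ {e}))`. Since `G` is disjoint from
`H ∪ {e}`, submodularity of `g` bounds the loss by `g(e | G)`, which the greedy choice of side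
bounds by `h(e | H)`. As `f(E \ S)` is `f(S)` with `g` and `h` exchanged, the chain of the
`E \ G_i` is the chain of the `H_i` for the run with the roles of `g` and `h` swapped. Finally,
the sets `H_i ∪ G_i` exhaust `E` and `H_i`, `G_i` stay disjoint, so `H_n = E \ G_n`.
-/

lemma compl_eq_insert_compl_insert {e : α} {S : Finset α} (he : e ∉ S) :
    Sᶜ = insert e (insert e S)ᶜ := by
  rw [compl_insert, insert_erase (mem_compl.mpr he)]

lemma fObj_compl (g h : Finset α → ℝ) (S : Finset α) : fObj g h Sᶜ = fObj h g S := by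
  simp only [fObj, compl_compl, add_comm]

lemma fObj_insert_sub {g h : Finset α → ℝ} {e : α} {S : Finset α} (he : e ∉ S) :
    fObj g h (insert e S) - fObj g h S = marg h e S - marg g e (insert e S)ᶜ := by
  simp only [fObj, marg]
  rw [← compl_eq_insert_compl_insert he]
  ring

lemma fObj_le_fObj_insert {g h : Finset α → ℝ} (hg : Submodular g) {e : α} {H G : Finset α}
    (hHG : Disjoint H G) (heH : e ∉ H) (heG : e ∉ G) (hgain : marg g e G ≤ marg h e H) :
    fObj g h H ≤ fObj g h (insert e H) := by
  have hG : G ⊆ (insert e H)ᶜ := by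
    rw [subset_compl_iff_disjoint_right, disjoint_insert_right]
    exact ⟨heG, hHG.symm⟩
  have hloss := hg hG e (by simp)
  have hdiff := fObj_insert_sub (g := g) (h := h) heH
  linarith

namespace DGRun

variable {g h : Finset α → ℝ} (R : DGRun α g h)

def swap : DGRun α h g where
  elt := R.elt
  H := R.G
  G := R.H
  H0 := R.G0
  G0 := R.H0
  mem i hi := by rw [union_comm]; exact R.mem i hi
  distinct := R.distinct
  enum := R.enum
  greedy i hi x hx := by
    rw [max_comm, max_comm (marg h _ _)]
    exact R.greedy i hi x (by rwa [union_comm])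
  step i hi := (R.step i hi).symm

lemma union_succ {i : ℕ} (hi : i < Fintype.card α) :
    R.H (i + 1) ∪ R.G (i + 1) = insert (R.elt i) (R.H i ∪ R.G i) := by
  rcases R.step i hi with ⟨hH, hG, -⟩ | ⟨hG, hH, -⟩
  · rw [hH, hG, insert_union]
  · rw [hH, hG, union_insert]

lemma union_eq_image_range {i : ℕ} (hi : i ≤ Fintype.card α) :
    R.H i ∪ R.G i = (range i).image R.elt := by
  induction i with
  | zero => simp [R.H0, R.G0]
  | succ i ih =>
    rw [R.union_succ hi, ih (by omega), range_add_one, image_insert]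

lemma union_card_eq_univ :
    R.H (Fintype.card α) ∪ R.G (Fintype.card α) = univ := by
  rw [R.union_eq_image_range le_rfl, eq_univ_iff_forall]
  intro x
  obtain ⟨i, hi, rfl⟩ := R.enum x
  exact mem_image_of_mem _ (mem_range.mpr hi)

lemma disjoint {i : ℕ} (hi : i ≤ Fintype.card α) : Disjoint (R.H i) (R.G i) := by
  induction i with
  | zero => simp [R.H0, R.G0]
  | succ i ih =>
    have hnew := R.mem i hi
    rw [mem_union, not_or] at hnew
    rcases R.step i hi with ⟨hH, hG, -⟩ | ⟨hG, hH, -⟩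
    · rw [hH, hG, disjoint_insert_left]; exact ⟨hnew.2, ih (by omega)⟩
    · rw [hH, hG, disjoint_insert_right]; exact ⟨hnew.1, ih (by omega)⟩

lemma H_card_eq_compl_G_card : R.H (Fintype.card α) = (R.G (Fintype.card α))ᶜ :=
  (IsCompl.of_eq (R.disjoint le_rfl).eq_bot R.union_card_eq_univ).eq_compl

lemma fObj_H_le_succ (hg : Submodular g) {i : ℕ} (hi : i < Fintype.card α) :
    fObj g h (R.H i) ≤ fObj g h (R.H (i + 1)) := by
  have hnew := R.mem i hi
  rw [mem_union, not_or] at hnew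
  rcases R.step i hi with ⟨hH, -, hgain⟩ | ⟨-, hH, -⟩
  · rw [hH]
    exact fObj_le_fObj_insert hg (R.disjoint hi.le) hnew.1 hnew.2 hgain
  · rw [hH]

end DGRun

theorem stmt11_general (g h : Finset α → ℝ)
    (hgs : Submodular g) (hhs : Submodular h)
    (hge : g ∅ = 0) (hhe : h ∅ = 0) (R : DGRun α g h) :
    fObj g h (R.H 0) = g Finset.univ ∧
    (∀ i < Fintype.card α, fObj g h (R.H i) ≤ fObj g h (R.H (i + 1))) ∧
    fObj g h ((R.G 0)ᶜ) = h Finset.univ ∧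
    (∀ i < Fintype.card α, fObj g h ((R.G i)ᶜ) ≤ fObj g h ((R.G (i + 1))ᶜ)) ∧
    fObj g h (R.H (Fintype.card α)) = fObj g h ((R.G (Fintype.card α))ᶜ) := by
  refine ⟨?_, fun i hi ↦ R.fObj_H_le_succ hgs hi, ?_, fun i hi ↦ ?_, ?_⟩
  · simp [fObj, R.H0, hhe]
  · simp [fObj, R.G0, hge]
  · rw [fObj_compl, fObj_compl]
    exact R.swap.fObj_H_le_succ hhs hi
  · rw [R.H_card_eq_compl_G_card]

theorem stmt11 (g h : Finset α → ℝ)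
    (hgm : Mono g) (hhm : Mono h) (hg0 : Nonneg g) (hh0 : Nonneg h)
    (hgs : Submodular g) (hhs : Submodular h)
    (hge : g ∅ = 0) (hhe : h ∅ = 0) (R : DGRun α g h) :
    fObj g h (R.H 0) = g Finset.univ ∧
    (∀ i < Fintype.card α, fObj g h (R.H i) ≤ fObj g h (R.H (i + 1))) ∧
    fObj g h ((R.G 0)ᶜ) = h Finset.univ ∧
    (∀ i < Fintype.card α, fObj g h ((R.G i)ᶜ) ≤ fObj g h ((R.G (i + 1))ᶜ)) ∧
    fObj g h (R.H (Fintype.card α)) = fObj g h ((R.G (Fintype.card α))ᶜ) :=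
  stmt11_general g h hgs hhs hge hhe R

end IncDec
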